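/- Let {X(τ):τ∈S_0^d} be a d-admissible family with sup_{τ∈S_0^d} E[X(τ)] < ∞. Then for every stopping time S∈S_0, the d-stopping value function coincides with the single-stopping value function of the new reward: v(S) = u(S) a.s. -/

import Mathlib

open MeasureTheory Filter Set

noncomputable section

namespace OptMultStop

variable {Ω : Type*}

/-- A real function is right-continuous with left limits (RCLL) on `[0, T]`. -/
def RCLLOn (f : ℝ → ℝ) (T : ℝ) : Prop :=
  (∀ t ∈ Set.Ico (0 : ℝ) T, ContinuousWithinAt f (Set.Ici t) t) ∧
    ∀ t ∈ Set.Ioc (0 : ℝ) T, ∃ l : ℝ, Filter.Tendsto f (nhdsWithin t (Set.Iio t)) (nhds l)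

/-- A real function is right-continuous on `[0, T)`. -/
def RCOn (f : ℝ → ℝ) (T : ℝ) : Prop :=
  ∀ t ∈ Set.Ico (0 : ℝ) T, ContinuousWithinAt f (Set.Ici t) t

/-- `τ` is a stopping time for `ℱ` taking values in `[s ·, T]`; for `s = S` a stopping
time this encodes membership in `S_S`. -/
def IsStopIn [m : MeasurableSpace Ω] (ℱ : Filtration ℝ m) (T : ℝ) (s τ : Ω → ℝ) : Prop :=
  IsStoppingTime ℱ (fun ω => (τ ω : WithTop ℝ)) ∧ (∀ ω, s ω ≤ τ ω) ∧ ∀ ω, τ ω ≤ T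

/-- Membership in `S_0`: a stopping time with values in `[0, T]`. -/
def Stop0 [m : MeasurableSpace Ω] (ℱ : Filtration ℝ m) (T : ℝ) (τ : Ω → ℝ) : Prop :=
  IsStopIn ℱ T (fun _ => (0 : ℝ)) τ

/-- `g` is an essential supremum of the family of random variables `s`. -/
def IsEssSupFam [MeasurableSpace Ω] (μ : Measure Ω) (s : Set (Ω → ℝ)) (g : Ω → ℝ) : Prop :=
  (∀ f ∈ s, f ≤ᵐ[μ] g) ∧ ∀ h : Ω → ℝ, (∀ f ∈ s, f ≤ᵐ[μ] h) → g ≤ᵐ[μ] h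

/-- `g` is an essential infimum of the family of random variables `s`. -/
def IsEssInfFam [MeasurableSpace Ω] (μ : Measure Ω) (s : Set (Ω → ℝ)) (g : Ω → ℝ) : Prop :=
  (∀ f ∈ s, g ≤ᵐ[μ] f) ∧ ∀ h : Ω → ℝ, (∀ f ∈ s, h ≤ᵐ[μ] f) → h ≤ᵐ[μ] g

/-- An `𝔽`-consistent nonlinear expectation `(E, Dom(E))` on the horizon `[0, T]`,
together with its conditional versions at stopping times, satisfying the domain
axioms (D1)-(D3), (A1)-(A4) at stopping times, and hypotheses (H0)-(H5). -/
structure FExp [m : MeasurableSpace Ω] (μ : Measure Ω) (T : ℝ) (ℱ : Filtration ℝ m) where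
  /-- the domain `Dom(E)` -/
  Dom : Set (Ω → ℝ)
  /-- `cond τ ξ` is the conditional expectation `E_τ[ξ]` at the stopping time `τ` -/
  cond : (Ω → ℝ) → (Ω → ℝ) → Ω → ℝ
  /-- `E0 ξ` is the (deterministic) value `E[ξ] = E_0[ξ]` -/
  E0 : (Ω → ℝ) → ℝ
  zero_mem : (fun _ => (0 : ℝ)) ∈ Dom
  one_mem : (fun _ => (1 : ℝ)) ∈ Dom
  /-- (H4): all constants belong to the domain -/
  const_mem : ∀ c : ℝ, (fun _ => c) ∈ Dom
  add_mem : ∀ {ξ η : Ω → ℝ}, ξ ∈ Dom → η ∈ Dom → ξ + η ∈ Dom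
  indicator_mem : ∀ {ξ : Ω → ℝ}, ξ ∈ Dom → ∀ {A : Set Ω}, MeasurableSet A →
    A.indicator ξ ∈ Dom
  sandwich_mem : ∀ {ξ η : Ω → ℝ}, η ∈ Dom → (∀ᵐ ω ∂μ, 0 ≤ ξ ω ∧ ξ ω ≤ η ω) → ξ ∈ Dom
  cond_mem : ∀ {τ ξ : Ω → ℝ}, Stop0 ℱ T τ → ξ ∈ Dom → 0 ≤ᵐ[μ] ξ → cond τ ξ ∈ Dom
  cond_nonneg : ∀ {τ ξ : Ω → ℝ}, Stop0 ℱ T τ → ξ ∈ Dom → 0 ≤ᵐ[μ] ξ → 0 ≤ᵐ[μ] cond τ ξ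
  /-- `E_τ[ξ]` is `F_τ`-measurable -/
  cond_adapted : ∀ {τ ξ : Ω → ℝ} (hτ : Stop0 ℱ T τ), ξ ∈ Dom → 0 ≤ᵐ[μ] ξ →
    Measurable[hτ.1.measurableSpace] (cond τ ξ)
  /-- monotonicity -/
  mono : ∀ {τ ξ η : Ω → ℝ}, Stop0 ℱ T τ → ξ ∈ Dom → 0 ≤ᵐ[μ] ξ → η ∈ Dom → 0 ≤ᵐ[μ] η →
    ξ ≤ᵐ[μ] η → cond τ ξ ≤ᵐ[μ] cond τ η
  /-- strict monotonicity -/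
  strict_mono : ∀ {τ ξ η : Ω → ℝ}, Stop0 ℱ T τ → ξ ∈ Dom → 0 ≤ᵐ[μ] ξ → η ∈ Dom →
    0 ≤ᵐ[μ] η → ξ ≤ᵐ[μ] η → cond τ ξ =ᵐ[μ] cond τ η → ξ =ᵐ[μ] η
  /-- time consistency -/
  time_consistent : ∀ {σ τ ξ : Ω → ℝ}, Stop0 ℱ T σ → Stop0 ℱ T τ → (∀ ω, σ ω ≤ τ ω) →
    ξ ∈ Dom → 0 ≤ᵐ[μ] ξ → cond σ (cond τ ξ) =ᵐ[μ] cond σ ξ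
  /-- zero-one law -/
  zero_one : ∀ {τ ξ : Ω → ℝ} (hτ : Stop0 ℱ T τ), ξ ∈ Dom → 0 ≤ᵐ[μ] ξ →
    ∀ {A : Set Ω}, MeasurableSet[hτ.1.measurableSpace] A →
    cond τ (A.indicator ξ) =ᵐ[μ] A.indicator (cond τ ξ)
  /-- translation invariance -/
  translation : ∀ {τ ξ η : Ω → ℝ} (hτ : Stop0 ℱ T τ), ξ ∈ Dom → 0 ≤ᵐ[μ] ξ → η ∈ Dom →
    0 ≤ᵐ[μ] η → Measurable[hτ.1.measurableSpace] η → cond τ (ξ + η) =ᵐ[μ] cond τ ξ + η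
  /-- `F_0` is trivial: `E_0[ξ]` is the constant `E0 ξ` -/
  E0_eq : ∀ {ξ : Ω → ℝ}, ξ ∈ Dom → 0 ≤ᵐ[μ] ξ →
    cond (fun _ => (0 : ℝ)) ξ =ᵐ[μ] fun _ => E0 ξ
  /-- the process `t ↦ E_t[ξ]` has RCLL paths -/
  rcll_paths : ∀ {ξ : Ω → ℝ}, ξ ∈ Dom → 0 ≤ᵐ[μ] ξ →
    ∀ᵐ ω ∂μ, RCLLOn (fun t => cond (fun _ => t) ξ ω) T
  /-- (H0) -/
  h0 : ∀ {A : Set Ω}, MeasurableSet A → 0 < μ A →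
    Tendsto (fun n : ℕ => E0 (A.indicator fun _ => (n : ℝ))) atTop atTop
  /-- (H1) -/
  h1 : ∀ {ξ : Ω → ℝ}, ξ ∈ Dom → 0 ≤ᵐ[μ] ξ → ∀ {A : ℕ → Set Ω},
    (∀ n, MeasurableSet (A n)) → Monotone A → (∀ᵐ ω ∂μ, ω ∈ ⋃ n, A n) →
    Tendsto (fun n => E0 ((A n).indicator ξ)) atTop (nhds (E0 ξ))
  /-- (H2) -/
  h2 : ∀ {ξ η : Ω → ℝ}, ξ ∈ Dom → 0 ≤ᵐ[μ] ξ → η ∈ Dom → 0 ≤ᵐ[μ] η →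
    ∀ {A : ℕ → Set Ω}, (∀ n, MeasurableSet (A n)) → Antitone A →
    (∀ᵐ ω ∂μ, ω ∉ ⋂ n, A n) →
    Tendsto (fun n => E0 (ξ + (A n).indicator η)) atTop (nhds (E0 ξ))
  /-- (H5) -/
  h5 : ∀ {ξ : ℕ → Ω → ℝ} {ζ : Ω → ℝ}, (∀ n, ξ n ∈ Dom) → (∀ n, 0 ≤ᵐ[μ] ξ n) →
    (∀ᵐ ω ∂μ, Tendsto (fun n => ξ n ω) atTop (nhds (ζ ω))) →
    (∃ C : ℝ, ∃ᶠ n in atTop, E0 (ξ n) ≤ C) → ζ ∈ Dom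

variable [m : MeasurableSpace Ω] {μ : Measure Ω} {T : ℝ} {ℱ : Filtration ℝ m}

/-- (H6): sub-additivity. -/
def FExp.Subadditive (𝔈 : FExp μ T ℱ) : Prop :=
  ∀ ⦃τ ξ η : Ω → ℝ⦄, Stop0 ℱ T τ → ξ ∈ 𝔈.Dom → 0 ≤ᵐ[μ] ξ → η ∈ 𝔈.Dom → 0 ≤ᵐ[μ] η →
    𝔈.cond τ (ξ + η) ≤ᵐ[μ] 𝔈.cond τ ξ + 𝔈.cond τ η

/-- (H7): positive homogeneity. -/
def FExp.PosHom (𝔈 : FExp μ T ℱ) : Prop :=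
  ∀ ⦃τ ξ : Ω → ℝ⦄ (l : ℝ), 0 ≤ l → Stop0 ℱ T τ → ξ ∈ 𝔈.Dom → 0 ≤ᵐ[μ] ξ →
    𝔈.cond τ (fun ω => l * ξ ω) =ᵐ[μ] fun ω => l * 𝔈.cond τ ξ ω

/-- Admissible family of rewards indexed by stopping times. -/
def Admissible (𝔈 : FExp μ T ℱ) (X : (Ω → ℝ) → Ω → ℝ) : Prop :=
  (∀ τ : Ω → ℝ, ∀ hτ : Stop0 ℱ T τ, X τ ∈ 𝔈.Dom ∧ 0 ≤ᵐ[μ] X τ ∧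
      Measurable[hτ.1.measurableSpace] (X τ)) ∧
    ∀ τ σ : Ω → ℝ, Stop0 ℱ T τ → Stop0 ℱ T σ →
      ∀ᵐ ω ∂μ, τ ω = σ ω → X τ ω = X σ ω

/-- `sup_{τ ∈ S_0} E[X(τ)] < ∞`. -/
def BddRewardE0 (𝔈 : FExp μ T ℱ) (X : (Ω → ℝ) → Ω → ℝ) : Prop :=
  ∃ C : ℝ, ∀ τ : Ω → ℝ, Stop0 ℱ T τ → 𝔈.E0 (X τ) ≤ C

/-- `v` is the value function family of the single stopping problem for the reward `X`:
`v(S) = esssup_{τ ∈ S_S} E_S[X(τ)]`. -/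
def IsValueFam (𝔈 : FExp μ T ℱ) (X v : (Ω → ℝ) → Ω → ℝ) : Prop :=
  ∀ S : Ω → ℝ, Stop0 ℱ T S →
    IsEssSupFam μ {g | ∃ τ : Ω → ℝ, IsStopIn ℱ T S τ ∧ g = 𝔈.cond S (X τ)} (v S)

/-- An `E`-supermartingale system. -/
def SupermartSys (𝔈 : FExp μ T ℱ) (h : (Ω → ℝ) → Ω → ℝ) : Prop :=
  (∀ τ : Ω → ℝ, ∀ hτ : Stop0 ℱ T τ, h τ ∈ 𝔈.Dom ∧ 0 ≤ᵐ[μ] h τ ∧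
      Measurable[hτ.1.measurableSpace] (h τ)) ∧
    ∀ τ σ : Ω → ℝ, Stop0 ℱ T τ → Stop0 ℱ T σ → (∀ᵐ ω ∂μ, τ ω ≤ σ ω) →
      𝔈.cond τ (h σ) ≤ᵐ[μ] h τ

/-- Right-continuity along stopping times in `E`-expectation (RCE). -/
def RCE (𝔈 : FExp μ T ℱ) (X : (Ω → ℝ) → Ω → ℝ) : Prop :=
  ∀ τ : Ω → ℝ, Stop0 ℱ T τ → ∀ τs : ℕ → Ω → ℝ, (∀ n, Stop0 ℱ T (τs n)) →
    (∀ᵐ ω ∂μ, Antitone (fun n => τs n ω) ∧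
      Tendsto (fun n => τs n ω) atTop (nhds (τ ω))) →
    Tendsto (fun n => 𝔈.E0 (X (τs n))) atTop (nhds (𝔈.E0 (X τ)))

/-- Left-continuity along stopping times in `E`-expectation (LCE). -/
def LCE (𝔈 : FExp μ T ℱ) (X : (Ω → ℝ) → Ω → ℝ) : Prop :=
  ∀ τ : Ω → ℝ, Stop0 ℱ T τ → ∀ τs : ℕ → Ω → ℝ, (∀ n, Stop0 ℱ T (τs n)) →
    (∀ᵐ ω ∂μ, Monotone (fun n => τs n ω) ∧
      Tendsto (fun n => τs n ω) atTop (nhds (τ ω))) →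
    Tendsto (fun n => 𝔈.E0 (X (τs n))) atTop (nhds (𝔈.E0 (X τ)))

/-- Continuity along stopping times in `E`-expectation (CE). -/
def CE (𝔈 : FExp μ T ℱ) (X : (Ω → ℝ) → Ω → ℝ) : Prop :=
  RCE 𝔈 X ∧ LCE 𝔈 X

/-- Right-continuity along stopping times (RC): a.s. pointwise convergence. -/
def RCfam (𝔈 : FExp μ T ℱ) (X : (Ω → ℝ) → Ω → ℝ) : Prop :=
  ∀ τ : Ω → ℝ, Stop0 ℱ T τ → ∀ τs : ℕ → Ω → ℝ, (∀ n, Stop0 ℱ T (τs n)) →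
    (∀ᵐ ω ∂μ, Antitone (fun n => τs n ω) ∧
      Tendsto (fun n => τs n ω) atTop (nhds (τ ω))) →
    ∀ᵐ ω ∂μ, Tendsto (fun n => X (τs n) ω) atTop (nhds (X τ ω))

/-- Biadmissible family of rewards indexed by pairs of stopping times. -/
def Biadmissible (𝔈 : FExp μ T ℱ) (X : (Ω → ℝ) → (Ω → ℝ) → Ω → ℝ) : Prop :=
  (∀ τ σ : Ω → ℝ, ∀ hτ : Stop0 ℱ T τ, ∀ hσ : Stop0 ℱ T σ,
      X τ σ ∈ 𝔈.Dom ∧ 0 ≤ᵐ[μ] X τ σ ∧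
      Measurable[(hτ.1.max hσ.1).measurableSpace] (X τ σ)) ∧
    ∀ τ σ τ' σ' : Ω → ℝ, Stop0 ℱ T τ → Stop0 ℱ T σ → Stop0 ℱ T τ' → Stop0 ℱ T σ' →
      ∀ᵐ ω ∂μ, τ ω = τ' ω → σ ω = σ' ω → X τ σ ω = X τ' σ' ω

/-- `sup_{τ,σ ∈ S_0} E[X(τ,σ)] < ∞`. -/
def BddReward2E0 (𝔈 : FExp μ T ℱ) (X : (Ω → ℝ) → (Ω → ℝ) → Ω → ℝ) : Prop :=
  ∃ C : ℝ, ∀ τ σ : Ω → ℝ, Stop0 ℱ T τ → Stop0 ℱ T σ → 𝔈.E0 (X τ σ) ≤ C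

/-- `v` is the value function family of the double stopping problem:
`v(S) = esssup_{τ₁,τ₂ ∈ S_S} E_S[X(τ₁,τ₂)]`. -/
def IsValueFam2 (𝔈 : FExp μ T ℱ) (X : (Ω → ℝ) → (Ω → ℝ) → Ω → ℝ)
    (v : (Ω → ℝ) → Ω → ℝ) : Prop :=
  ∀ S : Ω → ℝ, Stop0 ℱ T S →
    IsEssSupFam μ
      {g | ∃ τ₁ τ₂ : Ω → ℝ, IsStopIn ℱ T S τ₁ ∧ IsStopIn ℱ T S τ₂ ∧
        g = 𝔈.cond S (X τ₁ τ₂)} (v S)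

/-- `u₁(θ) = esssup_{τ₁ ∈ S_θ} E_θ[X(τ₁, θ)]`. -/
def IsU1 (𝔈 : FExp μ T ℱ) (X : (Ω → ℝ) → (Ω → ℝ) → Ω → ℝ) (u₁ : (Ω → ℝ) → Ω → ℝ) : Prop :=
  ∀ θ : Ω → ℝ, Stop0 ℱ T θ →
    IsEssSupFam μ {g | ∃ τ : Ω → ℝ, IsStopIn ℱ T θ τ ∧ g = 𝔈.cond θ (X τ θ)} (u₁ θ)

/-- `u₂(θ) = esssup_{τ₂ ∈ S_θ} E_θ[X(θ, τ₂)]`. -/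
def IsU2 (𝔈 : FExp μ T ℱ) (X : (Ω → ℝ) → (Ω → ℝ) → Ω → ℝ) (u₂ : (Ω → ℝ) → Ω → ℝ) : Prop :=
  ∀ θ : Ω → ℝ, Stop0 ℱ T θ →
    IsEssSupFam μ {g | ∃ τ : Ω → ℝ, IsStopIn ℱ T θ τ ∧ g = 𝔈.cond θ (X θ τ)} (u₂ θ)

/-- Uniform right-continuity of a biadmissible family along stopping times in
`ℰ`-expectation (URCℰ). -/
def URCE2 (ℰ : FExp μ T ℱ) (X : (Ω → ℝ) → (Ω → ℝ) → Ω → ℝ) : Prop :=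
  ∀ σ : Ω → ℝ, Stop0 ℱ T σ → ∀ σs : ℕ → Ω → ℝ, (∀ n, Stop0 ℱ T (σs n)) →
    (∀ᵐ ω ∂μ, Antitone (fun n => σs n ω) ∧
      Tendsto (fun n => σs n ω) atTop (nhds (σ ω))) →
    ∀ ε : ℝ, 0 < ε → ∃ N : ℕ, ∀ n ≥ N, ∀ τ : Ω → ℝ, Stop0 ℱ T τ →
      ℰ.E0 (fun ω => |X τ σ ω - X τ (σs n) ω|) ≤ ε ∧
      ℰ.E0 (fun ω => |X σ τ ω - X (σs n) τ ω|) ≤ ε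

/-- Uniform left-continuity of a biadmissible family along stopping times in
`ℰ`-expectation (ULCℰ). -/
def ULCE2 (ℰ : FExp μ T ℱ) (X : (Ω → ℝ) → (Ω → ℝ) → Ω → ℝ) : Prop :=
  ∀ σ : Ω → ℝ, Stop0 ℱ T σ → ∀ σs : ℕ → Ω → ℝ, (∀ n, Stop0 ℱ T (σs n)) →
    (∀ᵐ ω ∂μ, Monotone (fun n => σs n ω) ∧
      Tendsto (fun n => σs n ω) atTop (nhds (σ ω))) →
    ∀ ε : ℝ, 0 < ε → ∃ N : ℕ, ∀ n ≥ N, ∀ τ : Ω → ℝ, Stop0 ℱ T τ →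
      ℰ.E0 (fun ω => |X τ σ ω - X τ (σs n) ω|) ≤ ε ∧
      ℰ.E0 (fun ω => |X σ τ ω - X (σs n) τ ω|) ≤ ε

/-- Uniform continuity (UCℰ) of a biadmissible family. -/
def UCE2 (ℰ : FExp μ T ℱ) (X : (Ω → ℝ) → (Ω → ℝ) → Ω → ℝ) : Prop :=
  URCE2 ℰ X ∧ ULCE2 ℰ X

/-- `(E, Dom(E))` is dominated by `(Ẽ, Dom(Ẽ))`. -/
def Dominated (𝔈 𝔉 : FExp μ T ℱ) : Prop :=
  𝔈.Dom ⊆ 𝔉.Dom ∧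
    ∀ τ : Ω → ℝ, Stop0 ℱ T τ → ∀ ξ η : Ω → ℝ, ξ ∈ 𝔈.Dom → η ∈ 𝔈.Dom →
      ∀ᵐ ω ∂μ, 𝔈.cond τ (ξ + η) ω - 𝔈.cond τ η ω ≤ 𝔉.cond τ ξ ω

/-- The filtration contains all `μ`-null sets (part of the usual conditions). -/
def CompleteFiltration (μ : Measure Ω) (ℱ : Filtration ℝ m) : Prop :=
  ∀ s : Set Ω, μ s = 0 → ∀ t : ℝ, MeasurableSet[ℱ t] s

/-- The filtration is right-continuous (part of the usual conditions). -/
def RightContinuousFiltration (ℱ : Filtration ℝ m) : Prop :=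
  ∀ t : ℝ, (ℱ t : MeasurableSpace Ω) = ⨅ u ∈ Set.Ioi t, ℱ u

/-- A `d`-tuple of stopping times, all in `S_s`. -/
def StopVec (ℱ : Filtration ℝ m) (T : ℝ) (s : Ω → ℝ) {d : ℕ} (τ : Fin d → Ω → ℝ) : Prop :=
  ∀ i, IsStopIn ℱ T s (τ i)

/-- A `d`-admissible family of rewards. -/
def DAdmissible (𝔈 : FExp μ T ℱ) {d : ℕ} (X : (Fin d → Ω → ℝ) → Ω → ℝ) : Prop :=
  (∀ τ : Fin d → Ω → ℝ, StopVec ℱ T (fun _ => (0 : ℝ)) τ →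
      X τ ∈ 𝔈.Dom ∧ 0 ≤ᵐ[μ] X τ ∧
      ∀ h : IsStoppingTime ℱ fun ω => (((⨆ i, τ i ω : ℝ)) : WithTop ℝ),
        Measurable[h.measurableSpace] (X τ)) ∧
    ∀ τ σ : Fin d → Ω → ℝ, StopVec ℱ T (fun _ => (0 : ℝ)) τ →
      StopVec ℱ T (fun _ => (0 : ℝ)) σ →
      ∀ᵐ ω ∂μ, (∀ i, τ i ω = σ i ω) → X τ ω = X σ ω

/-- `sup_{τ ∈ S_0^d} E[X(τ)] < ∞`. -/
def BddRewardDE0 (𝔈 : FExp μ T ℱ) {d : ℕ} (X : (Fin d → Ω → ℝ) → Ω → ℝ) : Prop :=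
  ∃ C : ℝ, ∀ τ : Fin d → Ω → ℝ, StopVec ℱ T (fun _ => (0 : ℝ)) τ → 𝔈.E0 (X τ) ≤ C

/-- `v` is the value function family of the `d`-stopping problem:
`v(S) = esssup_{τ ∈ S_S^d} E_S[X(τ)]`. -/
def IsValueFamD (𝔈 : FExp μ T ℱ) {d : ℕ} (X : (Fin d → Ω → ℝ) → Ω → ℝ)
    (v : (Ω → ℝ) → Ω → ℝ) : Prop :=
  ∀ S : Ω → ℝ, Stop0 ℱ T S →
    IsEssSupFam μ
      {g | ∃ τ : Fin d → Ω → ℝ, StopVec ℱ T S τ ∧ g = 𝔈.cond S (X τ)} (v S)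

/-- `u^{(i)}(θ) = esssup_{τ ∈ S_θ^{d-1}} E_θ[X^{(i)}(τ, θ)]`, where `X^{(i)}(τ, θ)`
inserts `θ` in the `i`-th slot. -/
def IsUi (𝔈 : FExp μ T ℱ) {d : ℕ} (X : (Fin (d + 1) → Ω → ℝ) → Ω → ℝ)
    (ui : Fin (d + 1) → (Ω → ℝ) → Ω → ℝ) : Prop :=
  ∀ i : Fin (d + 1), ∀ θ : Ω → ℝ, Stop0 ℱ T θ →
    IsEssSupFam μ
      {g | ∃ τ : Fin d → Ω → ℝ, StopVec ℱ T θ τ ∧ g = 𝔈.cond θ (X (i.insertNth θ τ))}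
      (ui i θ)

/-- Uniform continuity (UCE) of a `d`-admissible family along monotone sequences of
stopping times. -/
def UCED (𝔈 : FExp μ T ℱ) {d : ℕ} (X : (Fin (d + 1) → Ω → ℝ) → Ω → ℝ) : Prop :=
  ∀ i : Fin (d + 1), ∀ S : Ω → ℝ, Stop0 ℱ T S → ∀ Ss : ℕ → Ω → ℝ,
    (∀ n, Stop0 ℱ T (Ss n)) →
    ((∀ᵐ ω ∂μ, Monotone fun n => Ss n ω) ∨ (∀ᵐ ω ∂μ, Antitone fun n => Ss n ω)) →
    (∀ᵐ ω ∂μ, Tendsto (fun n => Ss n ω) atTop (nhds (S ω))) →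
    ∀ ε : ℝ, 0 < ε → ∃ N : ℕ, ∀ n ≥ N, ∀ θ : Fin d → Ω → ℝ,
      StopVec ℱ T (fun _ => (0 : ℝ)) θ →
      𝔈.E0 (fun ω => |X (i.insertNth (Ss n) θ) ω - X (i.insertNth S θ) ω|) ≤ ε

open scoped Topology

/-!
Fix `θ ≥ S`. The rewards `E_θ[X(σ)]` over tuples `σ ∈ S_θ^d` with `min σ = θ` form an upward
directed family (paste two tuples along the `F_θ`-set where one of them does better), and its
essential supremum is `X̂(θ)`: on `{σ_i = θ}` the tuple `σ` is `θ` inserted in slot `i`, so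
`E_θ[X(σ)] ≤ u^{(i)}(θ)` there. Hence `X̂(θ)` is the a.e. increasing limit of some
`E_θ[X(σ_n)]`. By (H5) this puts `X̂(θ)` in `Dom(E)`, and a conditional monotone convergence
theorem, obtained from (H1) and strict monotonicity, turns `E_S[X(σ_n)] ≤ v(S)` into
`E_S[X̂(θ)] ≤ v(S)`; thus `u(S) ≤ v(S)`. Conversely, for `τ ∈ S_S^d` and `θ = min τ`, time
consistency gives `E_S[X(τ)] = E_S[E_θ[X(τ)]] ≤ E_S[X̂(θ)] ≤ u(S)`.
-/

theorem _root_.DirectedOn.exists_chain_dominating {α : Type*} {r : α → α → Prop} {s : Set α}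
    (hs : DirectedOn r s) {f : ℕ → α} (hf : ∀ n, f n ∈ s) :
    ∃ g : ℕ → α, (∀ n, g n ∈ s) ∧ (∀ n, r (g n) (g (n + 1))) ∧ ∀ n, r (f n) (g n) := by
  have : Nonempty α := ⟨f 0⟩
  choose! z hzs hz using hs
  let g : ℕ → α := fun n => Nat.rec (z (f 0) (f 0)) (fun n a => z a (f (n + 1))) n
  have hgs : ∀ n, g n ∈ s := fun n => by
    induction n with
    | zero => exact hzs _ (hf 0) _ (hf 0)
    | succ n ih => exact hzs _ ih _ (hf _)
  refine ⟨g, hgs, fun n => (hz _ (hgs n) _ (hf _)).1, fun n => ?_⟩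
  cases n with
  | zero => exact (hz _ (hf 0) _ (hf 0)).1
  | succ n => exact (hz _ (hgs n) _ (hf _)).2

section ArctanIntegral

open Real

lemma norm_arctan_le (x : ℝ) : ‖arctan x‖ ≤ π / 2 :=
  abs_le.2 ⟨(neg_pi_div_two_lt_arctan x).le, (arctan_lt_pi_div_two x).le⟩

variable [IsFiniteMeasure μ]

lemma integrable_arctan_comp {f : Ω → ℝ} (hf : AEMeasurable f μ) :
    Integrable (fun ω => arctan (f ω)) μ :=
  .of_bound (continuous_arctan.measurable.comp_aemeasurable hf).aestronglyMeasurable (π / 2)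
    (ae_of_all _ fun _ => norm_arctan_le _)

lemma integral_arctan_mono {f g : Ω → ℝ} (hf : AEMeasurable f μ)
    (hg : AEMeasurable g μ) (hfg : f ≤ᵐ[μ] g) :
    ∫ ω, arctan (f ω) ∂μ ≤ ∫ ω, arctan (g ω) ∂μ :=
  integral_mono_ae (integrable_arctan_comp hf) (integrable_arctan_comp hg)
    (hfg.mono fun _ h => arctan_strictMono.monotone h)

lemma tendsto_integral_arctan_comp {f : ℕ → Ω → ℝ} {g : Ω → ℝ} (hf : ∀ n, AEMeasurable (f n) μ)
    (hlim : ∀ᵐ ω ∂μ, Tendsto (fun n => f n ω) atTop (𝓝 (g ω))) :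
    Tendsto (fun n => ∫ ω, arctan (f n ω) ∂μ) atTop (𝓝 (∫ ω, arctan (g ω) ∂μ)) :=
  tendsto_integral_of_dominated_convergence (fun _ => π / 2)
    (fun n => (continuous_arctan.measurable.comp_aemeasurable (hf n)).aestronglyMeasurable)
    (integrable_const _)
    (fun _ => ae_of_all _ fun _ => norm_arctan_le _)
    (hlim.mono fun _ h => (continuous_arctan.tendsto _).comp h)

lemma ae_le_of_integral_arctan_max_le {f g : Ω → ℝ} (hf : AEMeasurable f μ)
    (hg : AEMeasurable g μ)
    (h : ∫ ω, arctan (max (f ω) (g ω)) ∂μ ≤ ∫ ω, arctan (g ω) ∂μ) : f ≤ᵐ[μ] g := by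
  have hle : g ≤ᵐ[μ] fun ω => max (f ω) (g ω) := ae_of_all _ fun _ => le_max_right _ _
  have heq := (integral_eq_iff_of_ae_le (integrable_arctan_comp hg)
    (integrable_arctan_comp (hf.max hg)) (hle.mono fun _ h => arctan_strictMono.monotone h)).1
    ((integral_arctan_mono hg (hf.max hg) hle).antisymm h)
  filter_upwards [heq] with ω hω
  exact max_eq_right_iff.1 (arctan_injective hω).symm

theorem exists_monotone_tendsto_of_isEssSupFam {F : Set (Ω → ℝ)} {u : Ω → ℝ}
    (hu : IsEssSupFam μ F u) (hne : F.Nonempty) (hmeas : ∀ f ∈ F, AEMeasurable f μ)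
    (hdir : DirectedOn (· ≤ᵐ[μ] ·) F) :
    ∃ h : ℕ → Ω → ℝ, (∀ n, h n ∈ F) ∧
      ∀ᵐ ω ∂μ, Monotone (fun n => h n ω) ∧ Tendsto (fun n => h n ω) atTop (𝓝 (u ω)) := by
  -- maximise the bounded functional `I` over `F` along a `≤ᵐ`-increasing sequence
  set I : (Ω → ℝ) → ℝ := fun f => ∫ ω, arctan (f ω) ∂μ
  have hbdd : BddAbove (I '' F) := ⟨π / 2 * μ.real univ, forall_mem_image.2 fun f _ =>
    (le_abs_self (I f)).trans (norm_integral_le_of_norm_le_const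
      (ae_of_all _ fun _ => norm_arctan_le _))⟩
  set M := sSup (I '' F)
  have happrox : ∀ n : ℕ, ∃ f ∈ F, M - 1 / (n + 1) < I f := fun n => by
    obtain ⟨_, ⟨f, hf, rfl⟩, hlt⟩ := exists_lt_of_lt_csSup (hne.image I)
      (sub_lt_self M (by positivity : (0 : ℝ) < 1 / (n + 1)))
    exact ⟨f, hf, hlt⟩
  choose f hfF hf using happrox
  obtain ⟨h, hhF, hstep, hfh⟩ := hdir.exists_chain_dominating hfF
  have hhm : ∀ n, AEMeasurable (h n) μ := fun n => hmeas _ (hhF n)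
  set G : Ω → ℝ := fun ω => ⨆ n, h n ω
  have hconv : ∀ᵐ ω ∂μ, Monotone (fun n => h n ω) ∧
      Tendsto (fun n => h n ω) atTop (𝓝 (G ω)) ∧ G ω ≤ u ω := by
    filter_upwards [ae_all_iff.2 hstep, ae_all_iff.2 fun n => hu.1 _ (hhF n)] with ω h1 h2
    have hm : Monotone fun n => h n ω := monotone_nat_of_le_succ h1
    exact ⟨hm, tendsto_atTop_ciSup hm ⟨u ω, forall_mem_range.2 h2⟩, ciSup_le h2⟩
  have hGm : AEMeasurable G μ := AEMeasurable.iSup hhm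
  have hMG : M ≤ I G := by
    refine le_of_tendsto_of_tendsto' ?_ (tendsto_integral_arctan_comp hhm
      (hconv.mono fun _ hω => hω.2.1)) fun n => (hf n).le.trans
        (integral_arctan_mono (hmeas _ (hfF n)) (hhm n) (hfh n))
    simpa using tendsto_const_nhds.sub (tendsto_one_div_add_atTop_nhds_zero_nat (𝕜 := ℝ))
  have hGub : ∀ g ∈ F, g ≤ᵐ[μ] G := by
    intro g hg
    refine ae_le_of_integral_arctan_max_le (hmeas g hg) hGm (le_trans ?_ hMG)
    refine le_of_tendsto (tendsto_integral_arctan_comp (fun n => (hmeas g hg).max (hhm n))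
      (hconv.mono fun _ hω => tendsto_const_nhds.max hω.2.1)) (Eventually.of_forall fun n => ?_)
    obtain ⟨z, hzF, hgz, hhz⟩ := hdir g hg (h n) (hhF n)
    calc I (fun ω => max (g ω) (h n ω)) ≤ I z :=
          integral_arctan_mono ((hmeas g hg).max (hhm n)) (hmeas z hzF)
            (hgz.sup_le hhz)
      _ ≤ M := le_csSup hbdd (mem_image_of_mem I hzF)
  have hGu : G =ᵐ[μ] u :=
    EventuallyLE.antisymm (hconv.mono fun _ hω => hω.2.2) (hu.2 G hGub)
  refine ⟨h, hhF, ?_⟩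
  filter_upwards [hconv, hGu] with ω h1 h2
  exact ⟨h1.1, h2 ▸ h1.2.1⟩

end ArctanIntegral

section StoppingTimes

variable {S θ τ τ' : Ω → ℝ}

lemma Stop0.zero (hT : 0 ≤ T) : Stop0 ℱ T (fun _ => (0 : ℝ)) :=
  ⟨isStoppingTime_const ℱ 0, fun _ => le_rfl, fun _ => hT⟩

lemma Stop0.horizon_nonneg [Nonempty Ω] (hS : Stop0 ℱ T S) : 0 ≤ T :=
  let ω := Classical.arbitrary Ω
  (hS.2.1 ω).trans (hS.2.2 ω)

lemma Stop0.isStopIn_self (hS : Stop0 ℱ T S) : IsStopIn ℱ T S S :=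
  ⟨hS.1, fun _ => le_rfl, hS.2.2⟩

lemma IsStopIn.of_le (h : IsStopIn ℱ T θ τ) (hSθ : ∀ ω, S ω ≤ θ ω) : IsStopIn ℱ T S τ :=
  ⟨h.1, fun ω => (hSθ ω).trans (h.2.1 ω), h.2.2⟩

lemma IsStopIn.stop0 (h : IsStopIn ℱ T S τ) (hS : Stop0 ℱ T S) : Stop0 ℱ T τ :=
  h.of_le hS.2.1

lemma StopVec.stop0 {k : ℕ} {σ : Fin k → Ω → ℝ} (h : StopVec ℱ T θ σ) (hθ : Stop0 ℱ T θ) :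
    StopVec ℱ T (fun _ => (0 : ℝ)) σ :=
  fun i => (h i).stop0 hθ

lemma StopVec.insertNth {k : ℕ} {σ : Fin k → Ω → ℝ} (h : StopVec ℱ T θ σ)
    (hθ : Stop0 ℱ T θ) (i : Fin (k + 1)) : StopVec ℱ T θ (i.insertNth θ σ) :=
  Fin.succAboveCases i (by simpa using hθ.isStopIn_self) fun j => by simpa using h j

lemma IsStopIn.piecewise (h : IsStopIn ℱ T θ τ) (h' : IsStopIn ℱ T θ τ') (hθ : Stop0 ℱ T θ)
    {C : Set Ω} [DecidablePred (· ∈ C)] (hC : MeasurableSet[hθ.1.measurableSpace] C) :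
    IsStopIn ℱ T θ (C.piecewise τ τ') := by
  refine ⟨fun t => ?_, fun ω => ?_, fun ω => ?_⟩
  · have hCt := ((hθ.1.measurableSet C).1 hC).2 t
    have hCt' := ((hθ.1.measurableSet Cᶜ).1 hC.compl).2 t
    have hset : {ω | ((C.piecewise τ τ' ω : ℝ) : WithTop ℝ) ≤ t} =
        (C ∩ {ω | (θ ω : WithTop ℝ) ≤ t}) ∩ {ω | (τ ω : WithTop ℝ) ≤ t} ∪
          (Cᶜ ∩ {ω | (θ ω : WithTop ℝ) ≤ t}) ∩ {ω | (τ' ω : WithTop ℝ) ≤ t} := by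
      ext ω
      by_cases hω : ω ∈ C
      · simpa [hω] using fun hτt : τ ω ≤ t => (h.2.1 ω).trans hτt
      · simpa [hω] using fun hτt : τ' ω ≤ t => (h'.2.1 ω).trans hτt
    rw [hset]
    exact (hCt.inter (h.1 t)).union (hCt'.inter (h'.1 t))
  · by_cases hω : ω ∈ C <;> simp [hω, h.2.1 ω, h'.2.1 ω]
  · by_cases hω : ω ∈ C <;> simp [hω, h.2.2 ω, h'.2.2 ω]

lemma isStopIn_iInf {k : ℕ} {σ : Fin (k + 1) → Ω → ℝ} (h : StopVec ℱ T S σ) :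
    IsStopIn ℱ T S (fun ω => ⨅ i, σ i ω) := by
  refine ⟨fun t => ?_, fun ω => le_ciInf fun i => (h i).2.1 ω,
    fun ω => (ciInf_le (finite_range _).bddBelow 0).trans ((h 0).2.2 ω)⟩
  have hset : {ω | (((⨅ i, σ i ω : ℝ)) : WithTop ℝ) ≤ t} =
      ⋃ i, {ω | (σ i ω : WithTop ℝ) ≤ t} := by
    ext ω
    simp only [mem_ofPred_eq, mem_iUnion, WithTop.coe_le_coe]
    obtain ⟨j, hj⟩ := exists_eq_ciInf_of_finite (f := fun i => σ i ω)
    exact ⟨fun hle => ⟨j, hj ▸ hle⟩,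
      fun ⟨i, hi⟩ => (ciInf_le (finite_range _).bddBelow i).trans hi⟩
  rw [hset]
  exact MeasurableSet.iUnion fun i => (h i).1 t

end StoppingTimes

lemma ae_indicator_nonneg {ξ : Ω → ℝ} (hξ0 : 0 ≤ᵐ[μ] ξ) (A : Set Ω) : 0 ≤ᵐ[μ] A.indicator ξ :=
  hξ0.mono fun _ h => indicator_apply_nonneg fun _ => h

lemma monotone_tendsto_indicator {α : Type*} {f : ℕ → α → ℝ} {g : α → ℝ} (A : Set α) {x : α}
    (h : Monotone (fun n => f n x) ∧ Tendsto (fun n => f n x) atTop (𝓝 (g x))) :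
    Monotone (fun n => A.indicator (f n) x) ∧
      Tendsto (fun n => A.indicator (f n) x) atTop (𝓝 (A.indicator g x)) := by
  by_cases hx : x ∈ A
  · simpa only [indicator_of_mem hx] using h
  · simpa only [indicator_of_notMem hx] using ⟨monotone_const, tendsto_const_nhds⟩

namespace FExp

variable {𝔈 : FExp μ T ℱ} {S θ ξ η : Ω → ℝ} {ζ : ℕ → Ω → ℝ}

lemma measurable_cond (hθ : Stop0 ℱ T θ) (hξ : ξ ∈ 𝔈.Dom) (hξ0 : 0 ≤ᵐ[μ] ξ) :
    Measurable (𝔈.cond θ ξ) :=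
  (𝔈.cond_adapted hθ hξ hξ0).mono hθ.1.measurableSpace_le le_rfl

lemma cond_congr_ae (hθ : Stop0 ℱ T θ) (hξ : ξ ∈ 𝔈.Dom) (hξ0 : 0 ≤ᵐ[μ] ξ) (hη : η ∈ 𝔈.Dom)
    (hη0 : 0 ≤ᵐ[μ] η) (h : ξ =ᵐ[μ] η) : 𝔈.cond θ ξ =ᵐ[μ] 𝔈.cond θ η :=
  (𝔈.mono hθ hξ hξ0 hη hη0 h.le).antisymm (𝔈.mono hθ hη hη0 hξ hξ0 h.symm.le)

lemma indicator_cond_congr (hθ : Stop0 ℱ T θ) (hξ : ξ ∈ 𝔈.Dom) (hξ0 : 0 ≤ᵐ[μ] ξ)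
    (hη : η ∈ 𝔈.Dom) (hη0 : 0 ≤ᵐ[μ] η) {A : Set Ω}
    (hA : MeasurableSet[hθ.1.measurableSpace] A) (h : ∀ᵐ ω ∂μ, ω ∈ A → ξ ω = η ω) :
    A.indicator (𝔈.cond θ ξ) =ᵐ[μ] A.indicator (𝔈.cond θ η) := by
  have hAm : MeasurableSet A := hθ.1.measurableSpace_le _ hA
  have hind : A.indicator ξ =ᵐ[μ] A.indicator η := by
    filter_upwards [h] with ω hω
    by_cases hωA : ω ∈ A <;> simp [hωA, hω]
  exact (𝔈.zero_one hθ hξ hξ0 hA).symm.trans <|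
    (cond_congr_ae hθ (𝔈.indicator_mem hξ hAm) (ae_indicator_nonneg hξ0 A)
      (𝔈.indicator_mem hη hAm) (ae_indicator_nonneg hη0 A) hind).trans (𝔈.zero_one hθ hη hη0 hA)

lemma cond_add_const (hθ : Stop0 ℱ T θ) (hξ : ξ ∈ 𝔈.Dom) (hξ0 : 0 ≤ᵐ[μ] ξ) {c : ℝ}
    (hc : 0 ≤ c) : 𝔈.cond θ (ξ + fun _ => c) =ᵐ[μ] 𝔈.cond θ ξ + fun _ => c :=
  𝔈.translation hθ hξ hξ0 (𝔈.const_mem c) (ae_of_all _ fun _ => hc) measurable_const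

variable [NeZero μ]

lemma E0_le_E0 (hT : 0 ≤ T) (hξ : ξ ∈ 𝔈.Dom) (hξ0 : 0 ≤ᵐ[μ] ξ) (hη : η ∈ 𝔈.Dom)
    (hη0 : 0 ≤ᵐ[μ] η) (h : ξ ≤ᵐ[μ] η) : 𝔈.E0 ξ ≤ 𝔈.E0 η :=
  eventually_const.1 <| ((𝔈.E0_eq hξ hξ0).symm.le.trans
    (𝔈.mono (Stop0.zero hT) hξ hξ0 hη hη0 h)).trans (𝔈.E0_eq hη hη0).le

lemma E0_cond (hT : 0 ≤ T) (hθ : Stop0 ℱ T θ) (hξ : ξ ∈ 𝔈.Dom) (hξ0 : 0 ≤ᵐ[μ] ξ) :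
    𝔈.E0 (𝔈.cond θ ξ) = 𝔈.E0 ξ :=
  eventually_const.1 <| ((𝔈.E0_eq (𝔈.cond_mem hθ hξ hξ0) (𝔈.cond_nonneg hθ hξ hξ0)).symm.trans
    ((𝔈.time_consistent (Stop0.zero hT) hθ hθ.2.1 hξ hξ0).trans (𝔈.E0_eq hξ hξ0)))

lemma E0_le_of_cond_le (hT : 0 ≤ T) (hθ : Stop0 ℱ T θ) (hξ : ξ ∈ 𝔈.Dom) (hξ0 : 0 ≤ᵐ[μ] ξ)
    (hη : η ∈ 𝔈.Dom) (hη0 : 0 ≤ᵐ[μ] η) (h : 𝔈.cond θ ξ ≤ᵐ[μ] 𝔈.cond θ η) :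
    𝔈.E0 ξ ≤ 𝔈.E0 η := by
  rw [← E0_cond hT hθ hξ hξ0, ← E0_cond hT hθ hη hη0]
  exact E0_le_E0 hT (𝔈.cond_mem hθ hξ hξ0) (𝔈.cond_nonneg hθ hξ hξ0) (𝔈.cond_mem hθ hη hη0)
    (𝔈.cond_nonneg hθ hη hη0) h

lemma E0_add_const (hT : 0 ≤ T) (hξ : ξ ∈ 𝔈.Dom) (hξ0 : 0 ≤ᵐ[μ] ξ) {c : ℝ} (hc : 0 ≤ c) :
    𝔈.E0 (ξ + fun _ => c) = 𝔈.E0 ξ + c := by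
  have hξc0 : 0 ≤ᵐ[μ] ξ + fun _ => c := hξ0.mono fun _ h => add_nonneg h hc
  refine eventually_const (f := ae μ).1 ?_
  filter_upwards [𝔈.E0_eq (𝔈.add_mem hξ (𝔈.const_mem c)) hξc0,
    cond_add_const (Stop0.zero hT) hξ hξ0 hc, 𝔈.E0_eq hξ hξ0] with ω h1 h2 h3
  rw [← h1, h2, Pi.add_apply, h3]

lemma ae_eq_of_le_of_E0_le (hT : 0 ≤ T) (hξ : ξ ∈ 𝔈.Dom) (hξ0 : 0 ≤ᵐ[μ] ξ) (hη : η ∈ 𝔈.Dom)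
    (hη0 : 0 ≤ᵐ[μ] η) (hle : ξ ≤ᵐ[μ] η) (hE : 𝔈.E0 η ≤ 𝔈.E0 ξ) : ξ =ᵐ[μ] η := by
  refine 𝔈.strict_mono (Stop0.zero hT) hξ hξ0 hη hη0 hle ((𝔈.E0_eq hξ hξ0).trans ?_)
  rw [(E0_le_E0 hT hξ hξ0 hη hη0 hle).antisymm hE]
  exact (𝔈.E0_eq hη hη0).symm


lemma E0_le_of_monotone_tendsto (hT : 0 ≤ T) (hζm : ∀ n, Measurable (ζ n))
    (hζ : ∀ n, ζ n ∈ 𝔈.Dom) (hζ0 : ∀ n, 0 ≤ᵐ[μ] ζ n) (hξ : ξ ∈ 𝔈.Dom) (hξ0 : 0 ≤ᵐ[μ] ξ)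
    (hlim : ∀ᵐ ω ∂μ, Monotone (fun n => ζ n ω) ∧ Tendsto (fun n => ζ n ω) atTop (𝓝 (ξ ω)))
    {c : ℝ} (hc : ∀ n, 𝔈.E0 (ζ n) ≤ c) : 𝔈.E0 ξ ≤ c := by
  refine le_of_forall_pos_le_add fun ε hε => ?_
  -- `ξ` itself need not be measurable, so the sets fed to (H1) are cut out by the `ζ n` alone
  set A : ℕ → Set Ω := accumulate fun k => ⋂ m, {ω | ζ m ω ≤ ζ k ω + ε}
  have hAm : ∀ n, MeasurableSet (A n) := fun n =>
    MeasurableSet.biUnion (to_countable _) fun k _ =>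
      MeasurableSet.iInter fun m => measurableSet_le (hζm m) ((hζm k).add_const ε)
  have hAcov : ∀ᵐ ω ∂μ, ω ∈ ⋃ n, A n := by
    filter_upwards [hlim] with ω ⟨hmono, htend⟩
    obtain ⟨k, hk⟩ := (htend.eventually (lt_mem_nhds (sub_lt_self (ξ ω) hε))).exists
    rw [iUnion_accumulate]
    exact mem_iUnion.2 ⟨k, mem_iInter.2 fun m =>
      show ζ m ω ≤ ζ k ω + ε by linarith [hmono.ge_of_tendsto htend m]⟩
  have hle : ∀ n, (A n).indicator ξ ≤ᵐ[μ] ζ n + fun _ => ε := fun n => by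
    filter_upwards [hlim, hζ0 n] with ω ⟨hmono, htend⟩ hω0
    by_cases hωA : ω ∈ A n
    · obtain ⟨k, hkn, hk⟩ := mem_accumulate.1 hωA
      rw [indicator_of_mem hωA]
      exact (le_of_tendsto' htend fun m => (mem_iInter.1 hk m : ζ m ω ≤ ζ k ω + ε)).trans
        (add_le_add (hmono hkn) le_rfl)
    · rw [indicator_of_notMem hωA]
      exact add_nonneg hω0 hε.le
  refine le_of_tendsto' (𝔈.h1 hξ hξ0 hAm monotone_accumulate hAcov) fun n => ?_
  calc 𝔈.E0 ((A n).indicator ξ) ≤ 𝔈.E0 (ζ n + fun _ => ε) :=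
        E0_le_E0 hT (𝔈.indicator_mem hξ (hAm n)) (ae_indicator_nonneg hξ0 _)
          (𝔈.add_mem (hζ n) (𝔈.const_mem ε)) ((hζ0 n).mono fun _ h => add_nonneg h hε.le)
          (hle n)
    _ = 𝔈.E0 (ζ n) + ε := E0_add_const hT (hζ n) (hζ0 n) hε.le
    _ ≤ c + ε := add_le_add (hc n) le_rfl

lemma ae_cond_lt_iSup_cond_add (hT : 0 ≤ T) (hS : Stop0 ℱ T S) (hζm : ∀ n, Measurable (ζ n))
    (hζ : ∀ n, ζ n ∈ 𝔈.Dom) (hζ0 : ∀ n, 0 ≤ᵐ[μ] ζ n) (hξ : ξ ∈ 𝔈.Dom) (hξ0 : 0 ≤ᵐ[μ] ξ)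
    (hlim : ∀ᵐ ω ∂μ, Monotone (fun n => ζ n ω) ∧ Tendsto (fun n => ζ n ω) atTop (𝓝 (ξ ω)))
    {δ : ℝ} (hδ : 0 < δ) :
    ∀ᵐ ω ∂μ, 𝔈.cond S ξ ω < (⨆ n, 𝔈.cond S (ζ n) ω) + δ := by
  set D := {ω | (⨆ n, 𝔈.cond S (ζ n) ω) + δ ≤ 𝔈.cond S ξ ω}
  have hDS : MeasurableSet[hS.1.measurableSpace] D :=
    measurableSet_le ((Measurable.iSup fun n => 𝔈.cond_adapted hS (hζ n) (hζ0 n)).add_const δ)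
      (𝔈.cond_adapted hS hξ hξ0)
  have hDm : MeasurableSet D := hS.1.measurableSpace_le _ hDS
  have hζδ : ∀ n, ζ n + (fun _ => δ) ∈ 𝔈.Dom := fun n => 𝔈.add_mem (hζ n) (𝔈.const_mem δ)
  have hζδ0 : ∀ n, 0 ≤ᵐ[μ] ζ n + fun _ => δ := fun n =>
    (hζ0 n).mono fun _ h => add_nonneg h hδ.le
  have hξδ0 : 0 ≤ᵐ[μ] ξ + fun _ => δ := hξ0.mono fun _ h => add_nonneg h hδ.le
  have hζξ : ∀ n, 𝔈.cond S (ζ n) ≤ᵐ[μ] 𝔈.cond S ξ := fun n =>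
    𝔈.mono hS (hζ n) (hζ0 n) hξ hξ0 (hlim.mono fun _ h => h.1.ge_of_tendsto h.2 n)
  -- adding `δ` on `D` does not raise `E0`, so `D` is null by strict monotonicity
  have hcond : ∀ n, 𝔈.cond S (D.indicator (ζ n + fun _ => δ)) ≤ᵐ[μ] 𝔈.cond S (D.indicator ξ) :=
    fun n => by
      filter_upwards [𝔈.zero_one hS (hζδ n) (hζδ0 n) hDS, cond_add_const hS (hζ n) (hζ0 n) hδ.le,
        𝔈.zero_one hS hξ hξ0 hDS, ae_all_iff.2 hζξ] with ω h1 h2 h3 h4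
      rw [h1, h3]
      by_cases hωD : ω ∈ D
      · rw [indicator_of_mem hωD, indicator_of_mem hωD, h2, Pi.add_apply]
        exact (add_le_add (le_ciSup ⟨_, forall_mem_range.2 h4⟩ n) le_rfl).trans hωD
      · simp [indicator_of_notMem hωD]
  have hE : 𝔈.E0 (D.indicator (ξ + fun _ => δ)) ≤ 𝔈.E0 (D.indicator ξ) := by
    refine E0_le_of_monotone_tendsto hT (fun n => ((hζm n).add_const δ).indicator hDm)
      (fun n => 𝔈.indicator_mem (hζδ n) hDm) (fun n => ae_indicator_nonneg (hζδ0 n) D)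
      (𝔈.indicator_mem (𝔈.add_mem hξ (𝔈.const_mem δ)) hDm) (ae_indicator_nonneg hξδ0 D)
      (hlim.mono fun ω h => monotone_tendsto_indicator D
        ⟨fun a b hab => add_le_add (h.1 hab) le_rfl, h.2.add_const δ⟩)
      fun n => E0_le_of_cond_le hT hS (𝔈.indicator_mem (hζδ n) hDm)
        (ae_indicator_nonneg (hζδ0 n) D) (𝔈.indicator_mem hξ hDm) (ae_indicator_nonneg hξ0 D)
        (hcond n)
  have heq := ae_eq_of_le_of_E0_le hT (𝔈.indicator_mem hξ hDm) (ae_indicator_nonneg hξ0 D)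
    (𝔈.indicator_mem (𝔈.add_mem hξ (𝔈.const_mem δ)) hDm) (ae_indicator_nonneg hξδ0 D)
    (ae_of_all _ fun _ => indicator_le_indicator (le_add_of_nonneg_right hδ.le)) hE
  filter_upwards [heq] with ω hω
  by_contra hω'
  have hωD : ω ∈ D := not_lt.1 hω'
  rw [indicator_of_mem hωD, indicator_of_mem hωD, Pi.add_apply] at hω
  linarith

lemma cond_le_iSup_of_monotone_tendsto (hT : 0 ≤ T) (hS : Stop0 ℱ T S)
    (hζm : ∀ n, Measurable (ζ n)) (hζ : ∀ n, ζ n ∈ 𝔈.Dom) (hζ0 : ∀ n, 0 ≤ᵐ[μ] ζ n)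
    (hξ : ξ ∈ 𝔈.Dom) (hξ0 : 0 ≤ᵐ[μ] ξ)
    (hlim : ∀ᵐ ω ∂μ, Monotone (fun n => ζ n ω) ∧ Tendsto (fun n => ζ n ω) atTop (𝓝 (ξ ω))) :
    𝔈.cond S ξ ≤ᵐ[μ] fun ω => ⨆ n, 𝔈.cond S (ζ n) ω := by
  filter_upwards [ae_all_iff.2 fun k : ℕ => ae_cond_lt_iSup_cond_add hT hS hζm hζ hζ0 hξ hξ0
    hlim Nat.one_div_pos_of_nat] with ω hω
  have hlim' : Tendsto (fun k : ℕ => (⨆ n, 𝔈.cond S (ζ n) ω) + 1 / (k + 1)) atTop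
      (𝓝 (⨆ n, 𝔈.cond S (ζ n) ω)) := by
    simpa using tendsto_const_nhds.add (tendsto_one_div_add_atTop_nhds_zero_nat (𝕜 := ℝ))
  exact ge_of_tendsto' hlim' fun k => (hω k).le

end FExp

def StopVecMin (ℱ : Filtration ℝ m) (T : ℝ) (θ : Ω → ℝ) {k : ℕ} (σ : Fin k → Ω → ℝ) : Prop :=
  StopVec ℱ T θ σ ∧ ∀ ω, ∃ i, σ i ω = θ ω

namespace DAdmissible

section

variable {𝔈 : FExp μ T ℱ} {k : ℕ} {X : (Fin k → Ω → ℝ) → Ω → ℝ} {θ : Ω → ℝ}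
  {σ σ' : Fin k → Ω → ℝ}

lemma mem_dom (hX : DAdmissible 𝔈 X) (hθ : Stop0 ℱ T θ) (hσ : StopVec ℱ T θ σ) : X σ ∈ 𝔈.Dom :=
  (hX.1 σ (hσ.stop0 hθ)).1

lemma nonneg (hX : DAdmissible 𝔈 X) (hθ : Stop0 ℱ T θ) (hσ : StopVec ℱ T θ σ) :
    0 ≤ᵐ[μ] X σ :=
  (hX.1 σ (hσ.stop0 hθ)).2.1

lemma indicator_cond_eq (hX : DAdmissible 𝔈 X) (hθ : Stop0 ℱ T θ) (hσ : StopVec ℱ T θ σ)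
    (hσ' : StopVec ℱ T θ σ') {C : Set Ω} (hC : MeasurableSet[hθ.1.measurableSpace] C)
    (h : ∀ ω ∈ C, ∀ j, σ j ω = σ' j ω) :
    C.indicator (𝔈.cond θ (X σ)) =ᵐ[μ] C.indicator (𝔈.cond θ (X σ')) :=
  FExp.indicator_cond_congr hθ (hX.mem_dom hθ hσ) (hX.nonneg hθ hσ) (hX.mem_dom hθ hσ')
    (hX.nonneg hθ hσ') hC <|
    (hX.2 σ σ' (hσ.stop0 hθ) (hσ'.stop0 hθ)).mono fun ω hω hωC => hω (h ω hωC)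

lemma cond_piecewise (hX : DAdmissible 𝔈 X) (hθ : Stop0 ℱ T θ) (hσ : StopVec ℱ T θ σ)
    (hσ' : StopVec ℱ T θ σ') {C : Set Ω} [DecidablePred (· ∈ C)]
    (hC : MeasurableSet[hθ.1.measurableSpace] C) :
    𝔈.cond θ (X fun j => C.piecewise (σ j) (σ' j)) =ᵐ[μ]
      C.piecewise (𝔈.cond θ (X σ)) (𝔈.cond θ (X σ')) := by
  have hρ : StopVec ℱ T θ fun j => C.piecewise (σ j) (σ' j) :=
    fun j => (hσ j).piecewise (hσ' j) hθ hC
  filter_upwards [hX.indicator_cond_eq hθ hρ hσ hC fun ω hω j => piecewise_eq_of_mem _ _ _ hω,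
    hX.indicator_cond_eq hθ hρ hσ' hC.compl fun ω hω j => piecewise_eq_of_notMem _ _ _ hω]
    with ω h1 h2
  by_cases hω : ω ∈ C
  · simpa [hω] using h1
  · simpa [hω] using h2

lemma directedOn_cond (hX : DAdmissible 𝔈 X) (hθ : Stop0 ℱ T θ) :
    DirectedOn (· ≤ᵐ[μ] ·) {g | ∃ σ, StopVecMin ℱ T θ σ ∧ g = 𝔈.cond θ (X σ)} := by
  classical
  rintro _ ⟨σ, hσ, rfl⟩ _ ⟨σ', hσ', rfl⟩
  set C := {ω | 𝔈.cond θ (X σ') ω ≤ 𝔈.cond θ (X σ) ω}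
  have hC : MeasurableSet[hθ.1.measurableSpace] C :=
    measurableSet_le (𝔈.cond_adapted hθ (hX.mem_dom hθ hσ'.1) (hX.nonneg hθ hσ'.1))
      (𝔈.cond_adapted hθ (hX.mem_dom hθ hσ.1) (hX.nonneg hθ hσ.1))
  have hmax : ∀ ω, C.piecewise (𝔈.cond θ (X σ)) (𝔈.cond θ (X σ')) ω =
      max (𝔈.cond θ (X σ) ω) (𝔈.cond θ (X σ') ω) := fun ω => by
    by_cases hω : 𝔈.cond θ (X σ') ω ≤ 𝔈.cond θ (X σ) ω
    · rw [piecewise_eq_of_mem _ _ _ (show ω ∈ C from hω), max_eq_left hω]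
    · rw [piecewise_eq_of_notMem _ _ _ (show ω ∉ C from hω), max_eq_right (le_of_not_ge hω)]
  have heq := hX.cond_piecewise hθ hσ.1 hσ'.1 hC
  refine ⟨_, ⟨fun j => C.piecewise (σ j) (σ' j),
    ⟨fun j => (hσ.1 j).piecewise (hσ'.1 j) hθ hC, fun ω => ?_⟩, rfl⟩, ?_, ?_⟩
  · by_cases hω : ω ∈ C
    · simpa [hω] using hσ.2 ω
    · simpa [hω] using hσ'.2 ω
  · filter_upwards [heq] with ω h
    exact (le_max_left _ _).trans_eq ((hmax ω).symm.trans h.symm)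
  · filter_upwards [heq] with ω h
    exact (le_max_right _ _).trans_eq ((hmax ω).symm.trans h.symm)

end

variable {𝔈 : FExp μ T ℱ} {d : ℕ} {X : (Fin (d + 1) → Ω → ℝ) → Ω → ℝ}
  {ui : Fin (d + 1) → (Ω → ℝ) → Ω → ℝ} {S θ : Ω → ℝ}

lemma cond_le_iSup_ui (hX : DAdmissible 𝔈 X) (hui : IsUi 𝔈 X ui) (hθ : Stop0 ℱ T θ)
    {σ : Fin (d + 1) → Ω → ℝ} (hσ : StopVecMin ℱ T θ σ) :
    𝔈.cond θ (X σ) ≤ᵐ[μ] fun ω => ⨆ i, ui i θ ω := by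
  have hi : ∀ i, ∀ᵐ ω ∂μ, σ i ω = θ ω → 𝔈.cond θ (X σ) ω ≤ ui i θ ω := fun i => by
    set A := {ω | σ i ω ≤ θ ω}
    have hA : MeasurableSet[hθ.1.measurableSpace] A := by
      simpa only [WithTop.coe_le_coe] using (hσ.1 i).1.measurableSet_stopping_time_le hθ.1
    set τ : Fin d → Ω → ℝ := fun j => σ (i.succAbove j)
    have hτ : StopVec ℱ T θ τ := fun j => hσ.1 _
    have hσA : ∀ ω ∈ A, ∀ j, σ j ω = (i.insertNth θ τ : Fin (d + 1) → Ω → ℝ) j ω :=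
      fun ω hω j => Fin.succAboveCases i (by simpa using le_antisymm hω ((hσ.1 i).2.1 ω))
        (fun j => by simp [τ]) j
    filter_upwards [hX.indicator_cond_eq hθ hσ.1 (hτ.insertNth hθ i) hA hσA,
      (hui i θ hθ).1 _ ⟨_, hτ, rfl⟩] with ω h1 h2 hωi
    have hωA : ω ∈ A := hωi.le
    rw [indicator_of_mem hωA, indicator_of_mem hωA] at h1
    exact h1.trans_le h2
  filter_upwards [ae_all_iff.2 hi] with ω h
  obtain ⟨i, hi⟩ := hσ.2 ω
  exact (h i hi).trans (le_ciSup (f := fun i => ui i θ ω) (finite_range _).bddAbove i)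

lemma isEssSupFam_iSup_ui (hX : DAdmissible 𝔈 X) (hui : IsUi 𝔈 X ui) (hθ : Stop0 ℱ T θ) :
    IsEssSupFam μ {g | ∃ σ, StopVecMin ℱ T θ σ ∧ g = 𝔈.cond θ (X σ)}
      (fun ω => ⨆ i, ui i θ ω) := by
  refine ⟨fun _ ⟨σ, hσ, hg⟩ => hg ▸ hX.cond_le_iSup_ui hui hθ hσ, fun h hh => ?_⟩
  have hle : ∀ i, ui i θ ≤ᵐ[μ] h := fun i => (hui i θ hθ).2 h fun _ ⟨τ, hτ, hg⟩ =>
    hh _ ⟨i.insertNth θ τ, ⟨hτ.insertNth hθ i, fun _ => ⟨i, by simp⟩⟩, hg⟩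
  filter_upwards [ae_all_iff.2 hle] with ω hω
  exact ciSup_le hω

lemma iSup_ui_nonneg (hX : DAdmissible 𝔈 X) (hui : IsUi 𝔈 X ui) (hθ : Stop0 ℱ T θ) :
    0 ≤ᵐ[μ] fun ω => ⨆ i, ui i θ ω := by
  have hσ : StopVec ℱ T θ fun _ : Fin d => θ := fun _ => hθ.isStopIn_self
  have hins := hσ.insertNth hθ 0
  filter_upwards [(hui 0 θ hθ).1 _ ⟨_, hσ, rfl⟩,
    𝔈.cond_nonneg hθ (hX.mem_dom hθ hins) (hX.nonneg hθ hins)] with ω h1 h2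
  exact h2.trans (h1.trans (le_ciSup (f := fun i => ui i θ ω) (finite_range _).bddAbove 0))

variable [IsFiniteMeasure μ]

lemma exists_seq_tendsto_iSup_ui (hX : DAdmissible 𝔈 X) (hui : IsUi 𝔈 X ui)
    (hθ : Stop0 ℱ T θ) :
    ∃ σ : ℕ → Fin (d + 1) → Ω → ℝ, (∀ n, StopVec ℱ T θ (σ n)) ∧
      ∀ᵐ ω ∂μ, Monotone (fun n => 𝔈.cond θ (X (σ n)) ω) ∧
        Tendsto (fun n => 𝔈.cond θ (X (σ n)) ω) atTop (𝓝 (⨆ i, ui i θ ω)) := by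
  have hθθ : StopVecMin ℱ T θ fun _ : Fin (d + 1) => θ :=
    ⟨fun _ => hθ.isStopIn_self, fun _ => ⟨0, rfl⟩⟩
  obtain ⟨h, hF, hlim⟩ := exists_monotone_tendsto_of_isEssSupFam
    (hX.isEssSupFam_iSup_ui hui hθ) ⟨_, _, hθθ, rfl⟩
    (fun _ ⟨σ, hσ, hg⟩ => hg ▸ (FExp.measurable_cond hθ (hX.mem_dom hθ hσ.1)
      (hX.nonneg hθ hσ.1)).aemeasurable)
    (hX.directedOn_cond hθ)
  choose σ hσ hσeq using hF
  refine ⟨σ, fun n => (hσ n).1, ?_⟩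
  simpa only [← hσeq] using hlim

variable [NeZero μ]

lemma iSup_ui_mem_dom (hT : 0 ≤ T) (hX : DAdmissible 𝔈 X) (hbdd : BddRewardDE0 𝔈 X)
    (hui : IsUi 𝔈 X ui) (hθ : Stop0 ℱ T θ) : (fun ω => ⨆ i, ui i θ ω) ∈ 𝔈.Dom := by
  obtain ⟨σ, hσ, hlim⟩ := hX.exists_seq_tendsto_iSup_ui hui hθ
  obtain ⟨C, hC⟩ := hbdd
  exact 𝔈.h5 (fun n => 𝔈.cond_mem hθ (hX.mem_dom hθ (hσ n)) (hX.nonneg hθ (hσ n)))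
    (fun n => 𝔈.cond_nonneg hθ (hX.mem_dom hθ (hσ n)) (hX.nonneg hθ (hσ n)))
    (hlim.mono fun _ h => h.2) ⟨C, Frequently.of_forall fun n =>
      (FExp.E0_cond hT hθ (hX.mem_dom hθ (hσ n)) (hX.nonneg hθ (hσ n))).trans_le
        (hC _ ((hσ n).stop0 hθ))⟩

lemma cond_iSup_ui_le (hT : 0 ≤ T) (hX : DAdmissible 𝔈 X) (hbdd : BddRewardDE0 𝔈 X)
    (hui : IsUi 𝔈 X ui) (hθ : Stop0 ℱ T θ) (hS : Stop0 ℱ T S) (hSθ : ∀ ω, S ω ≤ θ ω)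
    {V : Ω → ℝ} (hV : ∀ σ, StopVec ℱ T S σ → 𝔈.cond S (X σ) ≤ᵐ[μ] V) :
    𝔈.cond S (fun ω => ⨆ i, ui i θ ω) ≤ᵐ[μ] V := by
  obtain ⟨σ, hσ, hlim⟩ := hX.exists_seq_tendsto_iSup_ui hui hθ
  have hle : ∀ n, 𝔈.cond S (𝔈.cond θ (X (σ n))) ≤ᵐ[μ] V := fun n =>
    (𝔈.time_consistent hS hθ hSθ (hX.mem_dom hθ (hσ n)) (hX.nonneg hθ (hσ n))).le.trans
      (hV _ fun j => (hσ n j).of_le hSθ)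
  filter_upwards [FExp.cond_le_iSup_of_monotone_tendsto hT hS
      (fun n => FExp.measurable_cond hθ (hX.mem_dom hθ (hσ n)) (hX.nonneg hθ (hσ n)))
      (fun n => 𝔈.cond_mem hθ (hX.mem_dom hθ (hσ n)) (hX.nonneg hθ (hσ n)))
      (fun n => 𝔈.cond_nonneg hθ (hX.mem_dom hθ (hσ n)) (hX.nonneg hθ (hσ n)))
      (hX.iSup_ui_mem_dom hT hbdd hui hθ) (hX.iSup_ui_nonneg hui hθ) hlim,
    ae_all_iff.2 hle] with ω h1 h2
  exact h1.trans (ciSup_le h2)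

lemma exists_cond_le_cond_iSup_ui (hT : 0 ≤ T) (hX : DAdmissible 𝔈 X)
    (hbdd : BddRewardDE0 𝔈 X) (hui : IsUi 𝔈 X ui) (hS : Stop0 ℱ T S)
    {τ : Fin (d + 1) → Ω → ℝ} (hτ : StopVec ℱ T S τ) :
    ∃ θ, IsStopIn ℱ T S θ ∧
      𝔈.cond S (X τ) ≤ᵐ[μ] 𝔈.cond S (fun ω => ⨆ i, ui i θ ω) := by
  have hθS := isStopIn_iInf hτ
  have hθ := hθS.stop0 hS
  have hτθ : StopVecMin ℱ T (fun ω => ⨅ i, τ i ω) τ :=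
    ⟨fun i => ⟨(hτ i).1, fun _ => ciInf_le (finite_range _).bddBelow i, (hτ i).2.2⟩,
      fun ω => exists_eq_ciInf_of_finite⟩
  refine ⟨_, hθS, (𝔈.time_consistent hS hθ hθS.2.1 (hX.mem_dom hθ hτθ.1)
    (hX.nonneg hθ hτθ.1)).symm.le.trans ?_⟩
  exact 𝔈.mono hS (𝔈.cond_mem hθ (hX.mem_dom hθ hτθ.1) (hX.nonneg hθ hτθ.1))
    (𝔈.cond_nonneg hθ (hX.mem_dom hθ hτθ.1) (hX.nonneg hθ hτθ.1))
    (hX.iSup_ui_mem_dom hT hbdd hui hθ) (hX.iSup_ui_nonneg hui hθ)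
    (hX.cond_le_iSup_ui hui hθ hτθ)

end DAdmissible

theorem dStopping_eq_single_general [IsProbabilityMeasure μ] (𝔈 : FExp μ T ℱ)
    (d : ℕ) (X : (Fin (d + 1) → Ω → ℝ) → Ω → ℝ)
    (hX : DAdmissible 𝔈 X) (hbdd : BddRewardDE0 𝔈 X)
    (v : (Ω → ℝ) → Ω → ℝ) (hv : IsValueFamD 𝔈 X v)
    (ui : Fin (d + 1) → (Ω → ℝ) → Ω → ℝ) (hui : IsUi 𝔈 X ui)
    (Xh u : (Ω → ℝ) → Ω → ℝ)
    (hXh : ∀ θ : Ω → ℝ, Xh θ = fun ω => ⨆ i, ui i θ ω)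
    (hu : IsValueFam 𝔈 Xh u) :
    ∀ S : Ω → ℝ, Stop0 ℱ T S → v S =ᵐ[μ] u S := by
  intro S hS
  have := nonempty_of_isProbabilityMeasure μ
  have hT : 0 ≤ T := hS.horizon_nonneg
  refine EventuallyLE.antisymm ((hv S hS).2 _ ?_) ((hu S hS).2 _ ?_)
  · rintro _ ⟨τ, hτ, rfl⟩
    obtain ⟨θ, hθ, hle⟩ := hX.exists_cond_le_cond_iSup_ui hT hbdd hui hS hτ
    exact hle.trans ((hu S hS).1 _ ⟨θ, hθ, by rw [hXh]⟩)
  · rintro _ ⟨θ, hθ, rfl⟩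
    rw [hXh]
    exact hX.cond_iSup_ui_le hT hbdd hui (hθ.stop0 hS) hS hθ.2.1 fun σ hσ =>
      (hv S hS).1 _ ⟨σ, hσ, rfl⟩

/-- reduction of the `d`-stopping problem to a single stopping
problem: `v(S) = u(S)` a.s. -/
theorem dStopping_eq_single [IsProbabilityMeasure μ] (hT : 0 < T) (𝔈 : FExp μ T ℱ)
    (d : ℕ) (X : (Fin (d + 1) → Ω → ℝ) → Ω → ℝ)
    (hX : DAdmissible 𝔈 X) (hbdd : BddRewardDE0 𝔈 X)
    (v : (Ω → ℝ) → Ω → ℝ) (hv : IsValueFamD 𝔈 X v)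
    (ui : Fin (d + 1) → (Ω → ℝ) → Ω → ℝ) (hui : IsUi 𝔈 X ui)
    (Xh u : (Ω → ℝ) → Ω → ℝ)
    (hXh : ∀ θ : Ω → ℝ, Xh θ = fun ω => ⨆ i, ui i θ ω)
    (hu : IsValueFam 𝔈 Xh u) :
    ∀ S : Ω → ℝ, Stop0 ℱ T S → v S =ᵐ[μ] u S :=
  dStopping_eq_single_general 𝔈 d X hX hbdd v hv ui hui Xh u hXh hu

end OptMultStop
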